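/- arXiv:1602.04391 — 3 statements merged into one kernel-verified Lean document; each statement's English description precedes it below -/
import Mathlib

section
/- Let J, K ≥ 1 and let K₁ be the (2JK + 2K + 2J) × JK matrix obtained by stacking the row blocks I_{JK}, −I_{JK}, B, −B, C, −C. Then the number of nonzero entries of K₁K₁ᵀ equals 4(J + K + 7JK). -/
open Matrix
open scoped Classical

/-- `B` is the `K × JK` matrix `[I_K I_K ⋯ I_K]` of `J` horizontally
concatenated `K × K` identity blocks: entry `(k, (j, k'))` is `δ_{k k'}`. -/
def Bmat (J K : ℕ) : Matrix (Fin K) (Fin J × Fin K) ℝ :=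
  Matrix.of fun k jk => if jk.2 = k then (1 : ℝ) else 0

/-- `C = I_J ⊗ 1_Kᵀ` is the `J × JK` matrix with entry `(j, (j', k))` equal
to `δ_{j j'}`. -/
def Cmat (J K : ℕ) : Matrix (Fin J) (Fin J × Fin K) ℝ :=
  Matrix.of fun j jk => if jk.1 = j then (1 : ℝ) else 0

/-- Row index type for the stacked matrix `K₁`:
rows of `I_{JK}`, `−I_{JK}`, `B`, `−B`, `C`, `−C`. -/
abbrev RowIdx (J K : ℕ) :=
  (Fin J × Fin K) ⊕ (Fin J × Fin K) ⊕ Fin K ⊕ Fin K ⊕ Fin J ⊕ Fin J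

/-- The `(2JK + 2K + 2J) × JK` matrix obtained by stacking the row blocks
`I_{JK}`, `−I_{JK}`, `B`, `−B`, `C`, `−C`. -/
def Kone (J K : ℕ) : Matrix (RowIdx J K) (Fin J × Fin K) ℝ :=
  Matrix.of
    (Sum.elim (fun jk => (1 : Matrix (Fin J × Fin K) (Fin J × Fin K) ℝ) jk)
      (Sum.elim (fun jk => (-(1 : Matrix (Fin J × Fin K) (Fin J × Fin K) ℝ)) jk)
        (Sum.elim (Bmat J K)
          (Sum.elim (-(Bmat J K))
            (Sum.elim (Cmat J K) (-(Cmat J K)))))))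

/-- `card X` = number of nonzero entries of the matrix `X`. -/
noncomputable def matCard {m n : Type*} [Fintype m] [Fintype n]
    (M : Matrix m n ℝ) : ℕ :=
  (Finset.univ.filter fun p : m × n => M p.1 p.2 ≠ 0).card

/-!
Every row block of `K₁` is `±X` with `X ∈ {I, B, C}`, so `K₁K₁ᵀ` is a `6 × 6` block matrix whose
blocks are `±XYᵀ`. Signs do not change supports, so the count is four times that of the nine
products `XYᵀ`: `I`, `Bᵀ`, `Cᵀ`, `B`, `BBᵀ = J • I_K`, `BCᵀ = 1_{K×J}`, `C`, `CBᵀ = 1_{J×K}`,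
`CCᵀ = K • I_J`, with `7JK + K + J` nonzero entries in total.
-/

namespace Matrix

variable {m m₁ m₂ n n₁ n₂ : Type*} [Fintype m] [Fintype m₁] [Fintype m₂] [Fintype n]
  [Fintype n₁] [Fintype n₂]

theorem matCard_eq_sum (M : Matrix m n ℝ) :
    matCard M = ∑ i, ∑ j, if M i j ≠ 0 then 1 else 0 := by
  rw [matCard, Finset.card_filter, Fintype.sum_prod_type]

@[simp]
theorem matCard_transpose (M : Matrix m n ℝ) : matCard Mᵀ = matCard M := by
  rw [matCard_eq_sum, matCard_eq_sum, Finset.sum_comm]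
  rfl

@[simp]
theorem matCard_neg (M : Matrix m n ℝ) : matCard (-M) = matCard M := by
  simp only [matCard_eq_sum, neg_apply, ne_eq, neg_eq_zero]

@[simp]
theorem matCard_fromRows (A₁ : Matrix m₁ n ℝ) (A₂ : Matrix m₂ n ℝ) :
    matCard (fromRows A₁ A₂) = matCard A₁ + matCard A₂ := by
  rw [matCard_eq_sum, matCard_eq_sum, matCard_eq_sum, Fintype.sum_sum_type]
  rfl

@[simp]
theorem matCard_fromCols (A₁ : Matrix m n₁ ℝ) (A₂ : Matrix m n₂ ℝ) :
    matCard (fromCols A₁ A₂) = matCard A₁ + matCard A₂ := by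
  rw [← matCard_transpose, transpose_fromCols, matCard_fromRows, matCard_transpose,
    matCard_transpose]

theorem matCard_eq_card_of_ne_zero_iff (M : Matrix m n ℝ) (f : m → n)
    (hM : ∀ i j, M i j ≠ 0 ↔ j = f i) : matCard M = Fintype.card m := by
  simp only [matCard_eq_sum, hM, Finset.sum_ite_eq', Finset.mem_univ, if_true,
    Finset.sum_const, Finset.card_univ, smul_eq_mul, mul_one]

theorem matCard_smul_one [DecidableEq n] {c : ℝ} (hc : c ≠ 0) :
    matCard (c • (1 : Matrix n n ℝ)) = Fintype.card n :=
  matCard_eq_card_of_ne_zero_iff _ id fun _ _ => by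
    simp [one_apply, hc, eq_comm]

@[simp]
theorem matCard_one [DecidableEq n] : matCard (1 : Matrix n n ℝ) = Fintype.card n := by
  simpa using matCard_smul_one (n := n) one_ne_zero

theorem matCard_of_const {c : ℝ} (hc : c ≠ 0) :
    matCard (of fun (_ : m) (_ : n) => c) = Fintype.card m * Fintype.card n := by
  simp [matCard_eq_sum, hc]

end Matrix

open Matrix

theorem matCard_Bmat (J K : ℕ) : matCard (Bmat J K) = J * K := by
  rw [← matCard_transpose, matCard_eq_card_of_ne_zero_iff _ Prod.snd fun _ _ => 
    by simp [Bmat, eq_comm]]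
  simp

theorem matCard_Cmat (J K : ℕ) : matCard (Cmat J K) = J * K := by
  rw [← matCard_transpose, matCard_eq_card_of_ne_zero_iff _ Prod.fst fun _ _ => 
    by simp [Cmat, eq_comm]]
  simp

theorem Bmat_mul_transpose_self (J K : ℕ) : Bmat J K * (Bmat J K)ᵀ = (J : ℝ) • 1 := by
  ext k k'
  by_cases h : k = k' <;> simp [Bmat, mul_apply, one_apply, Fintype.sum_prod_type, h, Ne.symm]

theorem Cmat_mul_transpose_self (J K : ℕ) : Cmat J K * (Cmat J K)ᵀ = (K : ℝ) • 1 := by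
  ext j j'
  by_cases h : j = j' <;> simp [Cmat, mul_apply, one_apply, Fintype.sum_prod_type, h, Ne.symm]

theorem Bmat_mul_transpose_Cmat (J K : ℕ) : Bmat J K * (Cmat J K)ᵀ = of fun _ _ => 1 := by
  ext k j
  simp [Bmat, Cmat, mul_apply, Fintype.sum_prod_type]

theorem Cmat_mul_transpose_Bmat (J K : ℕ) : Cmat J K * (Bmat J K)ᵀ = of fun _ _ => 1 := by
  ext j k
  simp [Bmat, Cmat, mul_apply, Fintype.sum_prod_type]

theorem Kone_eq_fromRows (J K : ℕ) :
    Kone J K = fromRows 1 (fromRows (-1)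
      (fromRows (Bmat J K) (fromRows (-Bmat J K) (fromRows (Cmat J K) (-Cmat J K))))) :=
  rfl

theorem stmt2 (J K : ℕ) (hJ : 1 ≤ J) (hK : 1 ≤ K) :
    matCard (Kone J K * (Kone J K)ᵀ) = 4 * (J + K + 7 * J * K) := by
  have hJ0 : (J : ℝ) ≠ 0 := Nat.cast_ne_zero.mpr (by omega)
  have hK0 : (K : ℝ) ≠ 0 := Nat.cast_ne_zero.mpr (by omega)
  simp only [Kone_eq_fromRows, transpose_fromRows, fromRows_mul, mul_fromCols, matCard_fromRows,
    matCard_fromCols, transpose_neg, transpose_one, Matrix.neg_mul, Matrix.mul_neg,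
    Matrix.one_mul, Matrix.mul_one, matCard_neg, matCard_transpose]
  simp only [Bmat_mul_transpose_self, Cmat_mul_transpose_self, Bmat_mul_transpose_Cmat,
    Cmat_mul_transpose_Bmat, matCard_Bmat, matCard_Cmat, matCard_one, matCard_smul_one hJ0,
    matCard_smul_one hK0, matCard_of_const one_ne_zero, Fintype.card_prod, Fintype.card_fin]
  ring
end

section
/- Let s ≥ 1, B an s×s real positive definite matrix, b ∈ ℝ^s, and b̃ > 0. For any m ≤ s and any points x₁, …, x_m ∈ ∂S, the polyhedron T = ⋂_{j=1}^m H(x_j) = {x ∈ ℝ^s : (x−b)ᵀB(x_j−b) ≤ b̃ for j = 1,…,m} is unbounded; in particular, sup_{t ∈ T} dist(t, S) = ∞, so T is not a bounded cover of S. Hence at least s + 1 tangent points are needed to obtain a bounded cover of S. -/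
/-!
Because `m ≤ s`, the linear functionals `x ↦ xᵀB(x_j − b)` admit a common direction `v ≠ 0` on
which all of them are `≤ 0`: a common kernel vector if they are dependent, and otherwise a
solution of `⟨v, B(x_j − b)⟩ = -1` for all `j`. The whole ray `b + ℝ≥0 v` then lies in `T`,
whereas `S` is bounded since `B` is positive definite; so points of `T` are arbitrarily far from
`S`, and in particular `T` is unbounded.
-/

open Matrix

theorem exists_ne_zero_forall_apply_nonpos {𝕜 V ι : Type*} [Field 𝕜] [LinearOrder 𝕜]
    [IsStrictOrderedRing 𝕜] [AddCommGroup V] [Module 𝕜 V] [FiniteDimensional 𝕜 V] [Fintype ι]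
    (hι : Fintype.card ι ≤ Module.finrank 𝕜 V) (hV : 0 < Module.finrank 𝕜 V)
    (f : ι → Module.Dual 𝕜 V) : ∃ v ≠ 0, ∀ j, f j v ≤ 0 := by
  set L : V →ₗ[𝕜] ι → 𝕜 := LinearMap.pi f
  by_cases hL : LinearMap.ker L = ⊥
  · have hrank : Module.finrank 𝕜 V = Module.finrank 𝕜 (ι → 𝕜) :=
      le_antisymm (LinearMap.finrank_le_finrank_of_injective (LinearMap.ker_eq_bot.mp hL))
        (by rwa [Module.finrank_fintype_fun_eq_card])
    obtain ⟨v, hv⟩ := (LinearMap.injective_iff_surjective_of_finrank_eq_finrank hrank).mp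
      (LinearMap.ker_eq_bot.mp hL) (fun _ => -1)
    have : Nonempty ι := Fintype.card_pos_iff.mp (by simpa [hrank] using hV)
    refine ⟨v, ?_, fun j => (congrFun hv j).le.trans (by norm_num)⟩
    rintro rfl
    simpa using congrFun hv (Classical.arbitrary ι)
  · obtain ⟨v, hv, hv0⟩ := (Submodule.ne_bot_iff _).mp hL
    exact ⟨v, hv0, fun j => (congrFun (LinearMap.mem_ker.mp hv) j).le⟩

theorem exists_pos_mul_norm_sq_le {E : Type*} [NormedAddCommGroup E] [NormedSpace ℝ E]
    [FiniteDimensional ℝ E] (q : E → ℝ) (hq : Continuous q)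
    (hsmul : ∀ (t : ℝ) v, q (t • v) = t ^ 2 * q v) (hpos : ∀ v ≠ 0, 0 < q v) :
    ∃ c > 0, ∀ v, c * ‖v‖ ^ 2 ≤ q v := by
  rcases subsingleton_or_nontrivial E with hE | hE
  · exact ⟨1, one_pos, fun v => by simpa [Subsingleton.elim v 0] using (hsmul 0 0).ge⟩
  obtain ⟨u, hu, hmin⟩ := (isCompact_sphere (0 : E) 1).exists_isMinOn
    (NormedSpace.sphere_nonempty.mpr zero_le_one) hq.continuousOn
  have hu1 : ‖u‖ = 1 := mem_sphere_zero_iff_norm.mp hu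
  refine ⟨q u, hpos u (norm_ne_zero_iff.mp (by simp [hu1])), fun v => ?_⟩
  rcases eq_or_ne v 0 with rfl | hv
  · simpa using (hsmul 0 0).ge
  have hnv : 0 < ‖v‖ := norm_pos_iff.mpr hv
  have hle : q u ≤ q (‖v‖⁻¹ • v) := hmin (by simp [norm_smul, hnv.ne'])
  calc q u * ‖v‖ ^ 2 ≤ q (‖v‖⁻¹ • v) * ‖v‖ ^ 2 := by gcongr
    _ = q v := by rw [hsmul]; field_simp

namespace Matrix.PosDef

variable {n : Type*} [Fintype n] {B : Matrix n n ℝ}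

theorem exists_pos_mul_norm_sq_le_dotProduct_mulVec (hB : B.PosDef) :
    ∃ c > 0, ∀ v : EuclideanSpace ℝ n, c * ‖v‖ ^ 2 ≤ v ⬝ᵥ B *ᵥ v := by
  refine exists_pos_mul_norm_sq_le _ ?_ (fun t v => ?_) (fun v hv => ?_)
  · have h := PiLp.continuous_ofLp 2 (fun _ : n => ℝ)
    exact h.dotProduct (continuous_const.matrix_mulVec h)
  · simp only [WithLp.ofLp_smul, mulVec_smul, smul_dotProduct, dotProduct_smul, smul_eq_mul]
    ring
  · exact hB.dotProduct_mulVec_pos (by simpa using hv)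

theorem isBounded_setOf_dotProduct_mulVec_le (hB : B.PosDef) (b : EuclideanSpace ℝ n) (r : ℝ) :
    Bornology.IsBounded {x : EuclideanSpace ℝ n | (x - b) ⬝ᵥ B *ᵥ (x - b) ≤ r} := by
  obtain ⟨c, hc, hquad⟩ := hB.exists_pos_mul_norm_sq_le_dotProduct_mulVec
  refine (Metric.isBounded_closedBall (x := b) (r := √(r / c))).subset fun x hx => ?_
  rw [Metric.mem_closedBall, dist_eq_norm]
  exact Real.le_sqrt_of_sq_le ((le_div_iff₀' hc).mpr ((hquad _).trans hx))

end Matrix.PosDef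

theorem Metric.dist_sub_le_infDist_of_subset_closedBall {α : Type*} [PseudoMetricSpace α]
    {s : Set α} {b : α} {R : ℝ} (hs : s ⊆ closedBall b R) (hne : s.Nonempty) (x : α) :
    dist x b - R ≤ infDist x s :=
  (le_infDist hne).mpr fun y hy => by
    linarith [dist_triangle x y b, mem_closedBall.mp (hs hy)]

theorem stmt9_general (s m : ℕ) (hs : 1 ≤ s) (hm : m ≤ s)
    (B : Matrix (Fin s) (Fin s) ℝ) (hB : B.PosDef)
    (b : EuclideanSpace ℝ (Fin s)) (btil : ℝ) (hbtil : 0 < btil)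
    (pts : Fin m → EuclideanSpace ℝ (Fin s))
    (S T : Set (EuclideanSpace ℝ (Fin s)))
    (hS : S = {x : EuclideanSpace ℝ (Fin s) |
      ((x - b : EuclideanSpace ℝ (Fin s))) ⬝ᵥ
        B.mulVec (x - b : EuclideanSpace ℝ (Fin s)) ≤ btil})
    (hT : T = {x : EuclideanSpace ℝ (Fin s) | ∀ j,
      ((x - b : EuclideanSpace ℝ (Fin s))) ⬝ᵥ
        B.mulVec (pts j - b : EuclideanSpace ℝ (Fin s)) ≤ btil}) :
    ¬ Bornology.IsBounded T ∧ ∀ M : ℝ, ∃ t ∈ T, M < Metric.infDist t S := by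
  have hbS : b ∈ S := by simp [hS, hbtil.le]
  obtain ⟨R, hSR⟩ := (hS ▸ hB.isBounded_setOf_dotProduct_mulVec_le b btil).subset_closedBall b
  obtain ⟨v, hv0, hv⟩ := exists_ne_zero_forall_apply_nonpos (V := EuclideanSpace ℝ (Fin s))
    (by simpa using hm) (by rwa [finrank_euclideanSpace_fin]) fun j =>
      (dotProductBilin ℝ ℝ).flip (B *ᵥ (pts j - b)) ∘ₗ
        (WithLp.linearEquiv 2 ℝ (Fin s → ℝ)).toLinearMap
  have hray : ∀ k : ℝ, 0 ≤ k → b + k • v ∈ T := fun k hk => by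
    simp only [hT, Set.mem_ofPred_eq, add_sub_cancel_left, WithLp.ofLp_smul, smul_dotProduct]
    exact fun j => (mul_nonpos_of_nonneg_of_nonpos hk (hv j)).trans hbtil.le
  have hfar : ∀ M : ℝ, ∃ t ∈ T, M < Metric.infDist t S := fun M => by
    have hnv : 0 < ‖v‖ := norm_pos_iff.mpr hv0
    set k := (|M + R| + 1) / ‖v‖
    refine ⟨b + k • v, hray k (by positivity), ?_⟩
    have hdist : dist (b + k • v) b = |M + R| + 1 := by
      rw [dist_eq_norm, add_sub_cancel_left, norm_smul, Real.norm_of_nonneg (by positivity),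
        div_mul_cancel₀ _ hnv.ne']
    linarith [Metric.dist_sub_le_infDist_of_subset_closedBall hSR ⟨b, hbS⟩ (b + k • v),
      le_abs_self (M + R)]
  refine ⟨fun hTb => ?_, hfar⟩
  obtain ⟨r, hTr⟩ := hTb.subset_closedBall b
  obtain ⟨t, ht, hrt⟩ := hfar r
  exact (hrt.trans_le (Metric.infDist_le_dist_of_mem hbS)).not_ge (hTr ht)

/-- For any `m ≤ s` tangent points `x₁, …, x_m ∈ ∂S` on the boundary of the
ellipsoid `S = {x : (x−b)ᵀB(x−b) ≤ b̃}` (with `B` positive definite), the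
polyhedron `T = ⋂_{j} H(x_j)` cut out by the corresponding tangent
half-spaces is unbounded, and `sup_{t ∈ T} dist(t, S) = ∞` (i.e. the
Euclidean distances from points of `T` to `S` are unbounded), so `T` is not
a bounded cover of `S`; hence at least `s + 1` tangent points are needed for
a bounded cover. -/
theorem stmt9 (s m : ℕ) (hs : 1 ≤ s) (hm : m ≤ s)
    (B : Matrix (Fin s) (Fin s) ℝ) (hB : B.PosDef)
    (b : EuclideanSpace ℝ (Fin s)) (btil : ℝ) (hbtil : 0 < btil)
    (pts : Fin m → EuclideanSpace ℝ (Fin s))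
    (hpts : ∀ j, ((pts j - b : EuclideanSpace ℝ (Fin s))) ⬝ᵥ
      B.mulVec (pts j - b : EuclideanSpace ℝ (Fin s)) = btil)
    (S T : Set (EuclideanSpace ℝ (Fin s)))
    (hS : S = {x : EuclideanSpace ℝ (Fin s) |
      ((x - b : EuclideanSpace ℝ (Fin s))) ⬝ᵥ
        B.mulVec (x - b : EuclideanSpace ℝ (Fin s)) ≤ btil})
    (hT : T = {x : EuclideanSpace ℝ (Fin s) | ∀ j,
      ((x - b : EuclideanSpace ℝ (Fin s))) ⬝ᵥ
        B.mulVec (pts j - b : EuclideanSpace ℝ (Fin s)) ≤ btil}) :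
    ¬ Bornology.IsBounded T ∧ ∀ M : ℝ, ∃ t ∈ T, M < Metric.infDist t S :=
  stmt9_general s m hs hm B hB b btil hbtil pts S T hS hT
end

section
/- Let s ≥ 1, B an s×s real positive definite matrix, b ∈ ℝ^s, and b̃ > 0. Then there exist s + 1 points x₁, …, x_{s+1} ∈ ∂S such that the polytope T = ⋂_{j=1}^{s+1} H(x_j) = {x ∈ ℝ^s : (x−b)ᵀB(x_j−b) ≤ b̃ for j = 1,…,s+1} is a bounded set (hence a bounded cover of S). -/
/-!
Take the vertices `uⱼ` of a simplex around the origin, `e₁, …, e_s` and `-(e₁ + ⋯ + e_s)`, and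
scale each to a point `b + cⱼ uⱼ` of `∂S`. Every tangent half-space contains `S` because
`2 yᵀBp ≤ yᵀBy + pᵀBp`. Writing `z = B(x - b)`, the half-spaces say `zᵢ ≤ M` and `-∑ zᵢ ≤ M`
with `M = ∑ⱼ b̃ / cⱼ`, which confine `z` to a box; since `B` is invertible, `x` stays bounded.
-/

open Matrix

namespace Matrix

variable {n : Type*} [Fintype n]

lemma IsSymm.dotProduct_mulVec_comm {R : Type*} [CommSemiring R] {B : Matrix n n R}
    (hB : B.IsSymm) (v w : n → R) : v ⬝ᵥ B *ᵥ w = w ⬝ᵥ B *ᵥ v := by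
  rw [dotProduct_mulVec, dotProduct_comm, ← mulVec_transpose, hB.eq]

variable {B : Matrix n n ℝ}

lemma PosSemidef.two_mul_dotProduct_mulVec_le (hB : B.PosSemidef) (v w : n → ℝ) :
    2 * (v ⬝ᵥ B *ᵥ w) ≤ v ⬝ᵥ B *ᵥ v + w ⬝ᵥ B *ᵥ w := by
  have hsymm := (isHermitian_iff_isSymm.1 hB.isHermitian).dotProduct_mulVec_comm v w
  have hnonneg : 0 ≤ (v - w) ⬝ᵥ B *ᵥ (v - w) := by
    simpa using hB.dotProduct_mulVec_nonneg (v - w)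
  simp only [mulVec_sub, dotProduct_sub, sub_dotProduct] at hnonneg
  linarith

lemma PosDef.exists_pos_dotProduct_mulVec_smul_eq (hB : B.PosDef) {u : n → ℝ} (hu : u ≠ 0)
    {t : ℝ} (ht : 0 < t) : ∃ c : ℝ, 0 < c ∧ (c • u) ⬝ᵥ B *ᵥ (c • u) = t := by
  have hq : 0 < u ⬝ᵥ B *ᵥ u := by simpa using hB.dotProduct_mulVec_pos hu
  refine ⟨√(t / (u ⬝ᵥ B *ᵥ u)), Real.sqrt_pos.2 (div_pos ht hq), ?_⟩
  rw [mulVec_smul, smul_dotProduct, dotProduct_smul, smul_eq_mul, smul_eq_mul, ← mul_assoc,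
    Real.mul_self_sqrt (div_pos ht hq).le, div_mul_cancel₀ _ hq.ne']

lemma isBounded_setOf_mulVec_sub_mem [DecidableEq n] (hB : IsUnit B) (b : EuclideanSpace ℝ n)
    {P : Set (n → ℝ)} (hP : Bornology.IsBounded P) :
    Bornology.IsBounded {x : EuclideanSpace ℝ n | B *ᵥ (x - b).ofLp ∈ P} := by
  let f : EuclideanSpace ℝ n →ₗ[ℝ] n → ℝ :=
    B.mulVecLin ∘ₗ (WithLp.linearEquiv 2 ℝ (n → ℝ)).toLinearMap
  obtain ⟨K, -, hK⟩ := f.injective_iff_antilipschitz.1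
    ((mulVec_injective_iff_isUnit.2 hB).comp (WithLp.ofLp_injective 2))
  exact ((hK.isBounded_preimage hP).vadd b).subset fun x hx => ⟨x - b, hx, add_sub_cancel _ _⟩

end Matrix

lemma abs_le_card_mul_of_le_of_neg_sum_le {ι : Type*} [Fintype ι] {z : ι → ℝ} {M : ℝ}
    (hle : ∀ i, z i ≤ M) (hsum : -∑ i, z i ≤ M) (i : ι) : |z i| ≤ Fintype.card ι * M := by
  have hcard : (1 : ℝ) ≤ Fintype.card ι := by exact_mod_cast Fintype.card_pos_iff.2 ⟨i⟩
  have hgap : M - z i ≤ ∑ k, (M - z k) :=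
    Finset.single_le_sum (fun k _ => sub_nonneg.2 (hle k)) (Finset.mem_univ i)
  rw [Finset.sum_sub_distrib, Finset.sum_const, Finset.card_univ, nsmul_eq_mul] at hgap
  have hM : 0 ≤ M := by nlinarith [hle i]
  rw [abs_le]
  constructor <;> nlinarith [hle i]

/-- The standard basis of `ℝˢ` followed by minus its sum: these vectors positively span `ℝˢ`. -/
def simplexDirection (s : ℕ) : Fin (s + 1) → Fin s → ℝ :=
  Fin.lastCases (-1) fun i => Pi.single i 1

lemma simplexDirection_ne_zero {s : ℕ} (hs : 1 ≤ s) (j : Fin (s + 1)) :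
    simplexDirection s j ≠ 0 := by
  induction j using Fin.lastCases with
  | last => exact fun h => by simpa [simplexDirection] using congrFun h ⟨0, hs⟩
  | cast i => simp [simplexDirection]

lemma isBounded_setOf_forall_simplexDirection_dotProduct_le (s : ℕ) (M : ℝ) :
    Bornology.IsBounded {z : Fin s → ℝ | ∀ j, simplexDirection s j ⬝ᵥ z ≤ M} := by
  refine isBounded_iff_forall_norm_le.2 ⟨s * |M|, fun z hz => ?_⟩
  obtain ⟨hle, hsum⟩ := Fin.forall_fin_succ'.1 hz
  simp only [simplexDirection, Fin.lastCases_castSucc, Fin.lastCases_last, single_one_dotProduct,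
    neg_dotProduct, one_dotProduct] at hle hsum
  rw [pi_norm_le_iff_of_nonneg (by positivity)]
  intro i
  calc ‖z i‖ = |z i| := Real.norm_eq_abs _
    _ ≤ Fintype.card (Fin s) * M := abs_le_card_mul_of_le_of_neg_sum_le hle hsum i
    _ ≤ s * |M| := by rw [Fintype.card_fin]; gcongr; exact le_abs_self M

/-- There exist `s + 1` points on the boundary of the ellipsoid
`S = {x : (x−b)ᵀB(x−b) ≤ b̃}` (with `B` positive definite) such that the
polytope `T` cut out by the corresponding tangent half-spaces contains `S`
and is bounded — hence it is a bounded cover of `S`. -/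
theorem stmt10 (s : ℕ) (hs : 1 ≤ s)
    (B : Matrix (Fin s) (Fin s) ℝ) (hB : B.PosDef)
    (b : EuclideanSpace ℝ (Fin s)) (btil : ℝ) (hbtil : 0 < btil) :
    ∃ pts : Fin (s + 1) → EuclideanSpace ℝ (Fin s),
      (∀ j, ((pts j - b : EuclideanSpace ℝ (Fin s))) ⬝ᵥ
        B.mulVec (pts j - b : EuclideanSpace ℝ (Fin s)) = btil) ∧
      {x : EuclideanSpace ℝ (Fin s) |
          ((x - b : EuclideanSpace ℝ (Fin s))) ⬝ᵥ
            B.mulVec (x - b : EuclideanSpace ℝ (Fin s)) ≤ btil} ⊆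
        {x : EuclideanSpace ℝ (Fin s) | ∀ j,
          ((x - b : EuclideanSpace ℝ (Fin s))) ⬝ᵥ
            B.mulVec (pts j - b : EuclideanSpace ℝ (Fin s)) ≤ btil} ∧
      Bornology.IsBounded
        {x : EuclideanSpace ℝ (Fin s) | ∀ j,
          ((x - b : EuclideanSpace ℝ (Fin s))) ⬝ᵥ
            B.mulVec (pts j - b : EuclideanSpace ℝ (Fin s)) ≤ btil} := by
  choose c hc_pos hc using fun j =>
    hB.exists_pos_dotProduct_mulVec_smul_eq (simplexDirection_ne_zero hs j) hbtil
  refine ⟨fun j => b + WithLp.toLp 2 (c j • simplexDirection s j), fun j => by simpa using hc j,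
    fun x hx j => ?_, ?_⟩
  · have hpolar := hB.posSemidef.two_mul_dotProduct_mulVec_le (x - b).ofLp
      (c j • simplexDirection s j)
    simp only [Set.mem_ofPred_eq, add_sub_cancel_left, WithLp.ofLp_toLp] at hx ⊢
    linarith [hc j]
  · refine (isBounded_setOf_mulVec_sub_mem hB.isUnit b
      (isBounded_setOf_forall_simplexDirection_dotProduct_le s (∑ k, btil / c k))).subset
      fun x hx j => ?_
    have hj := hx j
    rw [add_sub_cancel_left, WithLp.ofLp_toLp, mulVec_smul, dotProduct_smul, smul_eq_mul,
      (isHermitian_iff_isSymm.1 hB.isHermitian).dotProduct_mulVec_comm,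
      ← le_div_iff₀' (hc_pos j)] at hj
    exact hj.trans <|
      Finset.single_le_sum (fun k _ => (div_pos hbtil (hc_pos k)).le) (Finset.mem_univ j)
end
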